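/- Every element of SU(2) is the exponential of an anti-Hermitian traceless combination of Pauli matrices: for every 2×2 complex matrix U with Uᴴ·U = 1 and det U = 1, there exist real numbers a, b, c such that U = exp(i·(a·σx + b·σy + c·σz)). -/

import Mathlib

open Matrix Complex

noncomputable def pauliX : Matrix (Fin 2) (Fin 2) ℂ := !![0, 1; 1, 0]
noncomputable def pauliY : Matrix (Fin 2) (Fin 2) ℂ := !![0, -I; I, 0]
noncomputable def pauliZ : Matrix (Fin 2) (Fin 2) ℂ := !![1, 0; 0, -1]

lemma pauli_comb_form (a b c : ℝ) :
    I • ((a:ℝ) • pauliX + (b:ℝ) • pauliY + (c:ℝ) • pauliZ) =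
      !![I*c, I*a + b; I*a - b, -(I*c)] := by
  ext i j
  fin_cases i <;> fin_cases j <;>
    simp [pauliX, pauliY, pauliZ, Matrix.smul_apply, Matrix.add_apply] <;>
    ring_nf <;> simp [Complex.I_sq] <;> ring

set_option maxHeartbeats 1000000 in
lemma exp_of_sq (A : Matrix (Fin 2) (Fin 2) ℂ) (r : ℝ) (hr : r ≠ 0)
    (hA : A * A = (-(r:ℂ)^2) • 1) :
    NormedSpace.exp A =
      (Complex.cos r) • (1 : Matrix (Fin 2) (Fin 2) ℂ) + (Complex.sin r / r) • A := by
  have hr' : (r:ℂ) ≠ 0 := Complex.ofReal_ne_zero.mpr hr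
  have hA2 : A^2 = (-(r:ℂ)^2) • (1 : Matrix (Fin 2) (Fin 2) ℂ) := by rw [sq, hA]
  have heven : ∀ k : ℕ, A ^ (2*k) = ((-(r:ℂ)^2)^k) • (1 : Matrix (Fin 2) (Fin 2) ℂ) := by
    intro k
    induction k with
    | zero => simp
    | succ n ih =>
      have h2 : 2*(n+1) = 2*n + 2 := by ring
      rw [h2, pow_add, ih, hA2, Matrix.smul_mul, Matrix.mul_smul, one_mul, smul_smul,
        ← pow_succ]
  have hodd : ∀ k : ℕ, A ^ (2*k+1) = ((-(r:ℂ)^2)^k) • A := by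
    intro k
    rw [pow_succ, heven k, Matrix.smul_mul, one_mul]
  have hsum : Summable (fun n : ℕ => ((n.factorial : ℂ))⁻¹ • A ^ n) := by
    letI : SeminormedRing (Matrix (Fin 2) (Fin 2) ℂ) := Matrix.linftyOpSemiNormedRing
    letI : NormedRing (Matrix (Fin 2) (Fin 2) ℂ) := Matrix.linftyOpNormedRing
    letI : NormedAlgebra ℂ (Matrix (Fin 2) (Fin 2) ℂ) := Matrix.linftyOpNormedAlgebra
    exact NormedSpace.expSeries_summable' (𝕂 := ℂ) A
  have hse : Summable (fun k : ℕ => ((2*k).factorial : ℂ)⁻¹ • A^(2*k)) :=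
    hsum.comp_injective (fun m n h => by omega)
  have hso : Summable (fun k : ℕ => ((2*k+1).factorial : ℂ)⁻¹ • A^(2*k+1)) :=
    hsum.comp_injective (fun m n h => by omega)
  have hcos : HasSum (fun k : ℕ => (((2*k).factorial : ℂ))⁻¹ * (-(r:ℂ)^2)^k)
      (Complex.cos r) := by
    convert Complex.hasSum_cos (r:ℂ) using 2 with k
    rw [neg_pow, ← pow_mul, div_eq_mul_inv]
    ring
  have hsin : HasSum (fun k : ℕ => (((2*k+1).factorial : ℂ))⁻¹ * (-(r:ℂ)^2)^k)
      (Complex.sin r / r) := by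
    have h := (Complex.hasSum_sin (r:ℂ)).div_const (r:ℂ)
    convert h using 2 with k
    · rfl
    have hf : (((2*k+1).factorial : ℕ) : ℂ) ≠ 0 :=
      Nat.cast_ne_zero.mpr (Nat.factorial_ne_zero _)
    rw [neg_pow, ← pow_mul]
    field_simp [hr', hf]
    ring
  rw [NormedSpace.exp_eq_tsum (𝕂 := ℂ)]
  show (∑' n : ℕ, ((n.factorial : ℂ))⁻¹ • A ^ n) = _
  rw [← tsum_even_add_odd (f := fun n : ℕ => ((n.factorial : ℂ))⁻¹ • A ^ n) hse hso]
  congr 1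
  · calc ∑' k : ℕ, ((2*k).factorial:ℂ)⁻¹ • A^(2*k)
        = ∑' k : ℕ, (((2*k).factorial:ℂ)⁻¹ * (-(r:ℂ)^2)^k) • (1:Matrix (Fin 2) (Fin 2) ℂ) := by
          simp only [heven, smul_smul]
      _ = (∑' k : ℕ, ((2*k).factorial:ℂ)⁻¹ * (-(r:ℂ)^2)^k) • (1:Matrix (Fin 2) (Fin 2) ℂ) :=
          Summable.tsum_smul_const hcos.summable 1
      _ = (Complex.cos r) • 1 := by rw [hcos.tsum_eq]
  · calc ∑' k : ℕ, ((2*k+1).factorial:ℂ)⁻¹ • A^(2*k+1)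
        = ∑' k : ℕ, (((2*k+1).factorial:ℂ)⁻¹ * (-(r:ℂ)^2)^k) • A := by
          simp only [hodd, smul_smul]
      _ = (∑' k : ℕ, ((2*k+1).factorial:ℂ)⁻¹ * (-(r:ℂ)^2)^k) • A :=
          Summable.tsum_smul_const hsin.summable A
      _ = (Complex.sin r / r) • A := by rw [hsin.tsum_eq]

set_option maxHeartbeats 1000000 in
/-- Every element of SU(2) is the exponential of an anti-Hermitian traceless combination
of Pauli matrices. -/
theorem su2_exp_surjective (U : Matrix (Fin 2) (Fin 2) ℂ)
    (hU : Uᴴ * U = 1) (hdet : U.det = 1) :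
    ∃ a b c : ℝ,
      U = NormedSpace.exp (I • (a • pauliX + b • pauliY + c • pauliZ)) := by
  have h1 : U⁻¹ = Uᴴ := Matrix.inv_eq_left_inv hU
  have h2 : U⁻¹ = U.adjugate := by
    rw [Matrix.inv_def, hdet]; simp
  have hadj : Uᴴ = !![U 1 1, -(U 0 1); -(U 1 0), U 0 0] := by
    rw [← h1, h2, Matrix.adjugate_fin_two]
  have hd : star (U 0 0) = U 1 1 := by
    have := congrFun (congrFun hadj 0) 0
    simpa [Matrix.conjTranspose_apply] using this
  have hg : star (U 0 1) = -(U 1 0) := by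
    have := congrFun (congrFun hadj 1) 0
    simpa [Matrix.conjTranspose_apply] using this
  have hU10 : U 1 0 = -star (U 0 1) := by rw [hg, neg_neg]
  have hU11 : U 1 1 = star (U 0 0) := hd.symm
  set p : ℝ := (U 0 0).re with hp
  set q : ℝ := (U 0 0).im with hq
  set v : ℝ := (U 0 1).re with hv
  set u : ℝ := (U 0 1).im with hu
  -- norm identity
  have hnorm : p^2 + q^2 + v^2 + u^2 = 1 := by
    have h00 := congrFun (congrFun hU 0) 0
    simp [Matrix.mul_apply, Fin.sum_univ_two, Matrix.conjTranspose_apply,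
      Matrix.one_apply] at h00
    rw [hU10] at h00
    have := congrArg Complex.re h00
    simp [Complex.mul_re, Complex.add_re] at this
    nlinarith [this]
  have hUeq : U = !![(p:ℂ) + q*I, (v:ℂ) + u*I; -(v:ℂ) + u*I, (p:ℂ) - q*I] := by
    ext i j
    fin_cases i <;> fin_cases j <;>
      simp [hU10, hU11] <;>
      apply Complex.ext <;>
      simp [hp, hq, hv, hu]
  by_cases hs0 : q^2 + v^2 + u^2 = 0
  · have hq0 : q = 0 := by nlinarith [sq_nonneg v, sq_nonneg u, sq_nonneg q]
    have hv0 : v = 0 := by nlinarith [sq_nonneg v, sq_nonneg u, sq_nonneg q]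
    have hu0 : u = 0 := by nlinarith [sq_nonneg v, sq_nonneg u, sq_nonneg q]
    have hp2 : (p - 1) * (p + 1) = 0 := by nlinarith
    rcases mul_eq_zero.mp hp2 with h | h
    · -- p = 1, U = 1
      refine ⟨0, 0, 0, ?_⟩
      have hA : I • ((0:ℝ) • pauliX + (0:ℝ) • pauliY + (0:ℝ) • pauliZ) = 0 := by
        simp
      rw [hA, NormedSpace.exp_zero, hUeq, hq0, hv0, hu0]
      have hp1 : p = 1 := by linarith
      rw [hp1]
      ext i j
      fin_cases i <;> fin_cases j <;> simp [Matrix.one_apply]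
    · -- p = -1, U = -1
      refine ⟨Real.pi, 0, 0, ?_⟩
      rw [pauli_comb_form]
      have hA : (!![I*((0:ℝ):ℂ), I*((Real.pi:ℝ):ℂ) + ((0:ℝ):ℂ);
            I*((Real.pi:ℝ):ℂ) - ((0:ℝ):ℂ), -(I*((0:ℝ):ℂ))] : Matrix (Fin 2) (Fin 2) ℂ) *
          !![I*((0:ℝ):ℂ), I*((Real.pi:ℝ):ℂ) + ((0:ℝ):ℂ);
            I*((Real.pi:ℝ):ℂ) - ((0:ℝ):ℂ), -(I*((0:ℝ):ℂ))] =
          (-((Real.pi:ℝ):ℂ)^2) • 1 := by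
        rw [Matrix.mul_fin_two, Matrix.one_fin_two]
        ext i j
        fin_cases i <;> fin_cases j <;>
          simp <;>
          first
            | ring1
            | linear_combination ((Real.pi:ℂ))^2 * Complex.I_sq
      rw [exp_of_sq _ Real.pi Real.pi_ne_zero hA]
      have hcos : Complex.cos ((Real.pi:ℝ):ℂ) = -1 := by
        rw [← Complex.ofReal_cos, Real.cos_pi]; simp
      have hsin : Complex.sin ((Real.pi:ℝ):ℂ) = 0 := by
        rw [← Complex.ofReal_sin, Real.sin_pi]; simp
      rw [hcos, hsin, hUeq, hq0, hv0, hu0]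
      have hp1 : p = -1 := by linarith
      rw [hp1]
      ext i j
      fin_cases i <;> fin_cases j <;> simp [Matrix.one_apply]
  · -- generic case
    set s : ℝ := Real.sqrt (q^2 + v^2 + u^2) with hsdef
    have hsnn : 0 ≤ q^2 + v^2 + u^2 := by positivity
    have hs2 : s^2 = q^2 + v^2 + u^2 := Real.sq_sqrt hsnn
    have hspos : 0 < s := Real.sqrt_pos.mpr (lt_of_le_of_ne hsnn (Ne.symm hs0))
    have hsne : s ≠ 0 := ne_of_gt hspos
    have hple : p ≤ 1 := by nlinarith
    have hpge : -1 ≤ p := by nlinarith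
    set θ : ℝ := Real.arccos p with hθdef
    have hcosθ : Real.cos θ = p := Real.cos_arccos hpge hple
    have hsinθ : Real.sin θ = s := by
      rw [hθdef, Real.sin_arccos, hsdef]
      congr 1
      linarith
    have hθne : θ ≠ 0 := by
      intro h
      rw [h, Real.sin_zero] at hsinθ
      exact hsne hsinθ.symm
    refine ⟨θ*u/s, θ*v/s, θ*q/s, ?_⟩
    rw [pauli_comb_form]
    set a : ℝ := θ*u/s with hadef
    set b : ℝ := θ*v/s with hbdef
    set c : ℝ := θ*q/s with hcdef
    have habc : a^2 + b^2 + c^2 = θ^2 := by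
      rw [hadef, hbdef, hcdef]
      field_simp
      nlinarith [hs2]
    have hA : (!![I*((c:ℝ):ℂ), I*((a:ℝ):ℂ) + ((b:ℝ):ℂ);
          I*((a:ℝ):ℂ) - ((b:ℝ):ℂ), -(I*((c:ℝ):ℂ))] : Matrix (Fin 2) (Fin 2) ℂ) *
        !![I*((c:ℝ):ℂ), I*((a:ℝ):ℂ) + ((b:ℝ):ℂ);
          I*((a:ℝ):ℂ) - ((b:ℝ):ℂ), -(I*((c:ℝ):ℂ))] = (-((θ:ℝ):ℂ)^2) • 1 := by
      have hcast : ((a:ℝ):ℂ)^2 + ((b:ℝ):ℂ)^2 + ((c:ℝ):ℂ)^2 = ((θ:ℝ):ℂ)^2 := by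
        have := congrArg (fun x : ℝ => (x:ℂ)) habc
        push_cast at this ⊢
        linear_combination this
      rw [Matrix.mul_fin_two, Matrix.one_fin_two]
      ext i j
      fin_cases i <;> fin_cases j <;>
        simp <;>
        first
          | ring1
          | linear_combination (((a:ℝ):ℂ)^2 + ((c:ℝ):ℂ)^2) * Complex.I_sq - hcast
    rw [exp_of_sq _ θ hθne hA]
    have hcosC : Complex.cos ((θ:ℝ):ℂ) = ((p:ℝ):ℂ) := by
      rw [← Complex.ofReal_cos, hcosθ]
    have hsinC : Complex.sin ((θ:ℝ):ℂ) = ((s:ℝ):ℂ) := by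
      rw [← Complex.ofReal_sin, hsinθ]
    rw [hcosC, hsinC, hUeq]
    have hθC : ((θ:ℝ):ℂ) ≠ 0 := Complex.ofReal_ne_zero.mpr hθne
    have hsC : ((s:ℝ):ℂ) ≠ 0 := Complex.ofReal_ne_zero.mpr hsne
    ext i j
    fin_cases i <;> fin_cases j <;>
      simp [Matrix.one_apply, hadef, hbdef, hcdef] <;> push_cast <;> field_simp <;> ring
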